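/- arXiv:2403.00304 — 2 statements merged into one kernel-verified Lean document; each statement's English description precedes it below -/
import Mathlib

section
/- Let 0 < β < α < 1 and β < θ < 1, set λ = (αθ−β)/(θ−β), and define f(s) = (α(1−s) + (1−β)s)/(1−βs), g(s) = (1−θ)/(1−θs), and P_ε(s) = λ(1−θ)/(1−θs) + (1−λ)(1−β)/(1−βs). Then for every integer h ≥ 1 and every real s with 0 ≤ s ≤ 1, ∏_{j=0}^{h−1} P_ε(f^{(j)}(s)) = g(s)/g(f^{(h)}(s)), where f^{(j)} denotes the j-fold iterate of f with f^{(0)}(s) = s. Consequently, the h-step ahead conditional probability generating function of the NoGeAR(1) process satisfies P_{X_{t+h}|X_t}(s) = ∏_{j=0}^{h−1} P_ε(f^{(j)}(s))·(f^{(h)}(s))^{X_t} = g(s)·[g(f^{(h)}(s))]^{−1}·(f^{(h)}(s))^{X_t}. -/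
/-- pgf of the NoGeAR(1) counting variable G*. -/
noncomputable def fG (α β : ℝ) (s : ℝ) : ℝ :=
  (α * (1 - s) + (1 - β) * s) / (1 - β * s)

/-- pgf of the geometric(θ) distribution with pmf (1-θ)θ^x. -/
noncomputable def gGeom (θ : ℝ) (s : ℝ) : ℝ := (1 - θ) / (1 - θ * s)

/-- pgf of the NoGeAR(1) innovation distribution. -/
noncomputable def Peps (α β θ : ℝ) (s : ℝ) : ℝ :=
  ((α * θ - β) / (θ - β)) * (1 - θ) / (1 - θ * s)
    + (1 - (α * θ - β) / (θ - β)) * (1 - β) / (1 - β * s)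

/-! The innovation pgf factors as `P_ε(s) = g(s) / g(f(s))`, a partial-fraction identity in `s`,
so the product along the orbit `s, f(s), f(f(s)), …` telescopes. All denominators stay positive
because `f` maps `(-∞, 1]` into itself. -/

theorem Finset.prod_range_eq_div_of_mul_eq {G₀ : Type*} [CommGroupWithZero G₀] {P g : ℕ → G₀}
    (hg : ∀ j, g j ≠ 0) (hP : ∀ j, P j * g (j + 1) = g j) (h : ℕ) :
    ∏ j ∈ range h, P j = g 0 / g h := by
  induction h with
  | zero => simp [hg 0]
  | succ n ih =>
    rw [prod_range_succ, ih, eq_div_iff (hg _), mul_assoc, hP, div_mul_cancel₀ _ (hg n)]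

lemma one_sub_mul_pos {a t : ℝ} (ha0 : 0 ≤ a) (ha1 : a < 1) (ht : t ≤ 1) : 0 < 1 - a * t := by
  nlinarith

lemma fG_le_one {α β s : ℝ} (hα : α ≤ 1) (hβ0 : 0 ≤ β) (hβ1 : β < 1) (hs : s ≤ 1) :
    fG α β s ≤ 1 := by
  rw [fG, div_le_one (one_sub_mul_pos hβ0 hβ1 hs)]
  nlinarith

lemma iterate_fG_le_one {α β s : ℝ} (hα : α ≤ 1) (hβ0 : 0 ≤ β) (hβ1 : β < 1) (hs : s ≤ 1)
    (j : ℕ) : (fG α β)^[j] s ≤ 1 := by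
  induction j with
  | zero => exact hs
  | succ n ih =>
    rw [Function.iterate_succ_apply']
    exact fG_le_one hα hβ0 hβ1 ih

lemma one_sub_mul_fG (α β θ s : ℝ) (hβs : 1 - β * s ≠ 0) :
    1 - θ * fG α β s = (1 - θ * α - (θ + β - θ * α - θ * β) * s) / (1 - β * s) := by
  rw [fG, eq_div_iff hβs, sub_mul, mul_assoc, div_mul_cancel₀ _ hβs]
  ring

lemma Peps_mul_gGeom_fG {α β θ s : ℝ} (hθβ : θ ≠ β) (hβs : 1 - β * s ≠ 0)
    (hθs : 1 - θ * s ≠ 0) (hθf : 1 - θ * fG α β s ≠ 0) :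
    Peps α β θ s * gGeom θ (fG α β s) = gGeom θ s := by
  have hθβ' : θ - β ≠ 0 := sub_ne_zero.mpr hθβ
  have hN := left_ne_zero_of_mul (one_sub_mul_fG α β θ s hβs ▸ hθf)
  rw [Peps, gGeom, gGeom, one_sub_mul_fG α β θ s hβs, div_div_eq_mul_div, mul_div_assoc', div_eq_div_iff hN hθs]
  field_simp
  ring

theorem hstep_pgf_general (α β θ : ℝ) (hβ : 0 < β) (hβα : β < α) (hα : α < 1)
    (hβθ : β < θ) (hθ : θ < 1)
    (h : ℕ) (s : ℝ) (hs1 : s ≤ 1) :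
    (∏ j ∈ Finset.range h, Peps α β θ ((fG α β)^[j] s)
        = gGeom θ s / gGeom θ ((fG α β)^[h] s)) ∧
    ∀ x : ℕ,
      (∏ j ∈ Finset.range h, Peps α β θ ((fG α β)^[j] s)) * ((fG α β)^[h] s) ^ x
        = gGeom θ s * (gGeom θ ((fG α β)^[h] s))⁻¹ * ((fG α β)^[h] s) ^ x := by
  have hβ1 : β < 1 := hβα.trans hα
  have hθ0 : 0 ≤ θ := (hβ.trans hβθ).le
  have horbit := iterate_fG_le_one hα.le hβ.le hβ1 hs1
  have hden : ∀ a, 0 ≤ a → a < 1 → ∀ j, 1 - a * (fG α β)^[j] s ≠ 0 :=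
    fun a ha0 ha1 j => (one_sub_mul_pos ha0 ha1 (horbit j)).ne'
  have hprod : ∏ j ∈ Finset.range h, Peps α β θ ((fG α β)^[j] s)
      = gGeom θ s / gGeom θ ((fG α β)^[h] s) := by
    refine Finset.prod_range_eq_div_of_mul_eq (g := fun j => gGeom θ ((fG α β)^[j] s))
      (fun j => div_ne_zero (sub_ne_zero.mpr hθ.ne') (hden θ hθ0 hθ j)) (fun j => ?_) h
    simp only [Function.iterate_succ_apply']
    refine Peps_mul_gGeom_fG hβθ.ne' (hden β hβ.le hβ1 j) (hden θ hθ0 hθ j) ?_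
    simpa only [Function.iterate_succ_apply'] using hden θ hθ0 hθ (j + 1)
  exact ⟨hprod, fun x => by rw [hprod, div_eq_mul_inv]⟩

theorem hstep_pgf (α β θ : ℝ) (hβ : 0 < β) (hβα : β < α) (hα : α < 1)
    (hβθ : β < θ) (hθ : θ < 1)
    (h : ℕ) (hh : 1 ≤ h) (s : ℝ) (hs0 : 0 ≤ s) (hs1 : s ≤ 1) :
    (∏ j ∈ Finset.range h, Peps α β θ ((fG α β)^[j] s)
        = gGeom θ s / gGeom θ ((fG α β)^[h] s)) ∧
    ∀ x : ℕ,
      (∏ j ∈ Finset.range h, Peps α β θ ((fG α β)^[j] s)) * ((fG α β)^[h] s) ^ x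
        = gGeom θ s * (gGeom θ ((fG α β)^[h] s))⁻¹ * ((fG α β)^[h] s) ^ x :=
  hstep_pgf_general α β θ hβ hβα hα hβθ hθ h s hs1
end

section
/- (Theorem 3.1, case x = 0, y ≥ 1.) Let 0 < β < α < 1, β < θ < 1 and β < αθ, let p_ε be the NoGeAR(1) innovation pmf and p1 the one-step transition function of the NoGeAR(1) chain, and set A = ∑_{k=1}^{∞} α^k p_ε(k) and B(x,k) as in the Chapman–Kolmogorov setup. Then for every integer y ≥ 1, the two-step ahead transition probability from state y to state 0 satisfies ∑_{k=0}^{∞} p1(y,k)·p1(k,0) = (1−αθ)·( α^y·(1−αθ+A) + ∑_{k=1}^{∞} α^k·B(k,y) ), all series being convergent. -/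
/-- NoGeAR(1) innovation pmf. -/
noncomputable def pEps (α β θ : ℝ) (x : ℕ) : ℝ :=
  ((α * θ - β) / (θ - β)) * θ ^ x * (1 - θ)
    + (1 - (α * θ - β) / (θ - β)) * β ^ x * (1 - β)

/-- One-step transition probabilities of the NoGeAR(1) chain (Eq. (4)). -/
noncomputable def p1 (α β θ : ℝ) (y x : ℕ) : ℝ :=
  if y = 0 then
    (if x = 0 then 1 - α * θ else pEps α β θ x)
  else if x = 0 then α ^ y * (1 - α * θ)
  else
    α ^ y * pEps α β θ x
      + ∑ m ∈ Finset.Icc 1 x, ∑ j ∈ Finset.Icc 1 (min m y),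
          (y.choose j : ℝ) * ((m - 1).choose (j - 1) : ℝ) *
            ((1 - α) * (1 - β)) ^ j * α ^ (y - j) * β ^ (m - j) * pEps α β θ (x - m)

/-- The quantity `A = ∑_{k=1}^∞ α^k p_ε(k)` of Theorem 3.1. -/
noncomputable def Aconst (α β θ : ℝ) : ℝ :=
  ∑' k : ℕ, α ^ (k + 1) * pEps α β θ (k + 1)

/-- The quantity `B(x,k)` of Theorem 3.1 (for x, k ≥ 1). -/
noncomputable def Bfun (α β θ : ℝ) (x k : ℕ) : ℝ :=
  ∑ m ∈ Finset.Icc 1 x, ∑ j ∈ Finset.Icc 1 (min m k),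
    (k.choose j : ℝ) * ((m - 1).choose (j - 1) : ℝ) *
      ((1 - α) * (1 - β)) ^ j * α ^ (k - j) * β ^ (m - j) * pEps α β θ (x - m)

/-!
Conditioning on the intermediate state `k`: the chain moves to `0` with probability `1 - αθ` from
`k = 0` and `α^k (1 - αθ)` from `k ≥ 1`, so every term of the Chapman–Kolmogorov series carries the
factor `1 - αθ`, and for `k ≥ 1` the term `α^k p1(y,k)` splits as `α^y α^k p_ε(k) + α^k B(k,y)`.
Both resulting series converge since `0 ≤ p_ε ≤ 1` makes `B(k,y)` at most polynomial in `k`.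
-/

open Finset

variable {α β θ : ℝ}

/-- `p_ε` is a mixture of two geometric pmfs with weight `(αθ - β)/(θ - β) ∈ [0, 1]`. -/
lemma pEps_mem_Icc (hβ : 0 ≤ β) (hα : α ≤ 1) (hβθ : β < θ) (hθ : θ ≤ 1) (hβαθ : β ≤ α * θ)
    (x : ℕ) : pEps α β θ x ∈ Set.Icc 0 1 := by
  have hθβ : 0 < θ - β := sub_pos.2 hβθ
  have hw0 : 0 ≤ (α * θ - β) / (θ - β) := div_nonneg (sub_nonneg.2 hβαθ) hθβ.le
  have hw1 : (α * θ - β) / (θ - β) ≤ 1 := by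
    rw [div_le_one hθβ]
    nlinarith
  have geom_mem : ∀ r : ℝ, 0 ≤ r → r ≤ 1 → r ^ x * (1 - r) ∈ Set.Icc (0 : ℝ) 1 := fun r h0 h1 =>
    ⟨mul_nonneg (pow_nonneg h0 x) (sub_nonneg.2 h1),
      mul_le_one₀ (pow_le_one₀ h0 h1) (sub_nonneg.2 h1) (by linarith)⟩
  have := convex_Icc (0 : ℝ) 1 (geom_mem θ (by linarith) hθ) (geom_mem β hβ (by linarith))
    hw0 (sub_nonneg.2 hw1) (add_sub_cancel _ _)
  simpa only [pEps, smul_eq_mul, mul_assoc] using this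

lemma summable_pow_mul_pEps (hα0 : 0 ≤ α) (hα1 : α < 1) (hp : ∀ n, pEps α β θ n ∈ Set.Icc 0 1) :
    Summable fun k : ℕ => α ^ (k + 1) * pEps α β θ (k + 1) := by
  refine Summable.of_nonneg_of_le (fun k => mul_nonneg (pow_nonneg hα0 _) (hp _).1)
    (fun k => mul_le_of_le_one_right (pow_nonneg hα0 _) (hp _).2) ?_
  exact (summable_nat_add_iff 1).2 (summable_geometric_of_lt_one hα0 hα1)

lemma p1_zero_zero : p1 α β θ 0 0 = 1 - α * θ := by
  simp [p1]

lemma p1_zero_of_ne_zero {y : ℕ} (hy : y ≠ 0) : p1 α β θ y 0 = α ^ y * (1 - α * θ) := by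
  simp [p1, hy]

lemma p1_succ_of_ne_zero {y : ℕ} (hy : y ≠ 0) (x : ℕ) :
    p1 α β θ y (x + 1) = α ^ y * pEps α β θ (x + 1) + Bfun α β θ (x + 1) y := by
  simp [p1, Bfun, hy]

lemma Bfun_nonneg (hα0 : 0 ≤ α) (hα1 : α ≤ 1) (hβ0 : 0 ≤ β) (hβ1 : β ≤ 1)
    (hp : ∀ n, 0 ≤ pEps α β θ n) (x k : ℕ) : 0 ≤ Bfun α β θ x k := by
  have h1α : 0 ≤ 1 - α := sub_nonneg.2 hα1
  have h1β : 0 ≤ 1 - β := sub_nonneg.2 hβ1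
  refine sum_nonneg fun m _ => sum_nonneg fun j _ => ?_
  have := hp (x - m)
  positivity

lemma sum_Icc_one_choose_le_two_pow (n k : ℕ) : ∑ j ∈ Icc 1 n, k.choose j ≤ 2 ^ k :=
  calc ∑ j ∈ Icc 1 n, k.choose j ≤ ∑ j ∈ range (k + 1), k.choose j :=
        sum_le_sum_of_ne_zero fun _ _ hj =>
          mem_range_succ_iff.2 (not_lt.1 (mt Nat.choose_eq_zero_of_lt hj))
    _ = 2 ^ k := Nat.sum_range_choose k

lemma Bfun_le (hα0 : 0 ≤ α) (hα1 : α ≤ 1) (hβ0 : 0 ≤ β) (hβ1 : β ≤ 1)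
    (hp : ∀ n, pEps α β θ n ∈ Set.Icc 0 1) (x k : ℕ) :
    Bfun α β θ x k ≤ 2 ^ k * (x : ℝ) ^ (k + 1) := by
  have term_le : ∀ m ∈ Icc 1 x, ∀ j ∈ Icc 1 (min m k),
      (k.choose j : ℝ) * ((m - 1).choose (j - 1) : ℝ) * ((1 - α) * (1 - β)) ^ j *
        α ^ (k - j) * β ^ (m - j) * pEps α β θ (x - m) ≤ k.choose j * (x : ℝ) ^ k := by
    intro m hm j hj
    simp only [mem_Icc, le_min_iff] at hm hj
    have hchoose : ((m - 1).choose (j - 1) : ℝ) ≤ (x : ℝ) ^ k := by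
      exact_mod_cast calc (m - 1).choose (j - 1) ≤ (m - 1) ^ (j - 1) := Nat.choose_le_pow _ _
        _ ≤ x ^ (j - 1) := Nat.pow_le_pow_left (by omega) _
        _ ≤ x ^ k := Nat.pow_le_pow_right (by omega) (by omega)
    have h1α : 0 ≤ 1 - α := sub_nonneg.2 hα1
    have h1β : 0 ≤ 1 - β := sub_nonneg.2 hβ1
    have hq : ((1 - α) * (1 - β)) ^ j ≤ 1 :=
      pow_le_one₀ (by positivity) (mul_le_one₀ (by linarith) h1β (by linarith))
    have hαpow : α ^ (k - j) ≤ 1 := pow_le_one₀ hα0 hα1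
    have hβpow : β ^ (m - j) ≤ 1 := pow_le_one₀ hβ0 hβ1
    obtain ⟨hp0, hp1⟩ := hp (x - m)
    calc _ ≤ (k.choose j : ℝ) * (x : ℝ) ^ k * 1 * 1 * 1 * 1 := by gcongr
      _ = _ := by ring
  calc Bfun α β θ x k ≤ ∑ m ∈ Icc 1 x, ∑ j ∈ Icc 1 (min m k), (k.choose j : ℝ) * (x : ℝ) ^ k :=
        sum_le_sum fun m hm => sum_le_sum (term_le m hm)
    _ ≤ ∑ m ∈ Icc 1 x, 2 ^ k * (x : ℝ) ^ k := by
        gcongr with m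
        rw [← sum_mul]
        gcongr
        exact_mod_cast sum_Icc_one_choose_le_two_pow (min m k) k
    _ = 2 ^ k * (x : ℝ) ^ (k + 1) := by
        simp only [sum_const, Nat.card_Icc, nsmul_eq_mul]
        push_cast
        ring

lemma summable_pow_mul_Bfun (hα0 : 0 ≤ α) (hα1 : α < 1) (hβ0 : 0 ≤ β) (hβ1 : β ≤ 1)
    (hp : ∀ n, pEps α β θ n ∈ Set.Icc 0 1) (y : ℕ) :
    Summable fun k : ℕ => α ^ (k + 1) * Bfun α β θ (k + 1) y := by
  have hpoly : Summable fun k : ℕ => 2 ^ y * (((k + 1 : ℕ) : ℝ) ^ (y + 1) * α ^ (k + 1)) :=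
    ((summable_nat_add_iff (f := fun n : ℕ => (n : ℝ) ^ (y + 1) * α ^ n) 1).2
      (summable_pow_mul_geometric_of_norm_lt_one (y + 1)
        (by rwa [Real.norm_of_nonneg hα0]))).mul_left _
  refine Summable.of_nonneg_of_le (fun k => mul_nonneg (pow_nonneg hα0 _)
    (Bfun_nonneg hα0 hα1.le hβ0 hβ1 (fun n => (hp n).1) _ _)) (fun k => ?_) hpoly
  calc α ^ (k + 1) * Bfun α β θ (k + 1) y ≤ α ^ (k + 1) * (2 ^ y * ((k + 1 : ℕ) : ℝ) ^ (y + 1)) :=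
        mul_le_mul_of_nonneg_left (Bfun_le hα0 hα1.le hβ0 hβ1 hp _ _) (pow_nonneg hα0 _)
    _ = _ := by ring

theorem two_step_y_zero (α β θ : ℝ) (hβ : 0 < β) (hβα : β < α) (hα : α < 1)
    (hβθ : β < θ) (hθ : θ < 1) (hβαθ : β < α * θ)
    (y : ℕ) (hy : 1 ≤ y) :
    Summable (fun k : ℕ => α ^ (k + 1) * Bfun α β θ (k + 1) y) ∧
    HasSum (fun k : ℕ => p1 α β θ y k * p1 α β θ k 0)
      ((1 - α * θ) * (α ^ y * (1 - α * θ + Aconst α β θ)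
        + ∑' k : ℕ, α ^ (k + 1) * Bfun α β θ (k + 1) y)) := by
  have hα0 : 0 ≤ α := hβ.le.trans hβα.le
  have hp := pEps_mem_Icc hβ.le hα.le hβθ hθ.le hβαθ.le
  have hA := summable_pow_mul_pEps hα0 hα hp
  have hB := summable_pow_mul_Bfun hα0 hα hβ.le (hβα.trans hα).le hp y
  refine ⟨hB, ?_⟩
  have hy0 : y ≠ 0 := Nat.one_le_iff_ne_zero.1 hy
  have hterm : ∀ k : ℕ, p1 α β θ y (k + 1) * p1 α β θ (k + 1) 0
      = (1 - α * θ) * (α ^ y * (α ^ (k + 1) * pEps α β θ (k + 1))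
        + α ^ (k + 1) * Bfun α β θ (k + 1) y) := fun k => by
    rw [p1_succ_of_ne_zero hy0, p1_zero_of_ne_zero k.add_one_ne_zero]
    ring
  have htail : HasSum (fun k : ℕ => p1 α β θ y (k + 1) * p1 α β θ (k + 1) 0)
      ((1 - α * θ) * (α ^ y * Aconst α β θ + ∑' k : ℕ, α ^ (k + 1) * Bfun α β θ (k + 1) y)) := by
    simp only [hterm, Aconst]
    convert ((hA.hasSum.mul_left (α ^ y)).add hB.hasSum).mul_left (1 - α * θ) using 1
  convert htail.zero_add (f := fun k => p1 α β θ y k * p1 α β θ k 0) using 1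
  rw [p1_zero_of_ne_zero hy0, p1_zero_zero]
  ring
end
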